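/- Let K devices be partitioned into d ≥ 2 groups, with group membership s_k ∈ {1,…,d} and A_i the set of devices in group i (each A_i nonempty). Given loss values F_1,…,F_K ≥ 0, weights p_k > 0, λ ≥ 0, and group averages L_i = (1/|A_i|) ∑_{k∈A_i} F_k, the quantity H = ∑_k p_k F_k + λ ∑_{1≤i<j≤d} |L_i − L_j| equals ∑_k p_k (1 + (λ/(p_k |A_{s_k}|)) r_k) F_k, where r_k = ∑_{1≤j≠s_k≤d} sign(L_{s_k} − L_j). -/
import Mathlib

open Finset

lemma sign_mul_eq_abs (x : ℝ) : Real.sign x * x = |x| := by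
  rcases lt_trichotomy x 0 with h | h | h
  · rw [Real.sign_of_neg h, abs_of_neg h]; ring
  · simp [h]
  · rw [Real.sign_of_pos h, abs_of_pos h]; ring

theorem stmt_1 (K d : ℕ) (hd : 2 ≤ d) (hdK : d ≤ K) (s : Fin K → Fin d)
    (hA : ∀ i : Fin d, (Finset.univ.filter (fun k => s k = i)).Nonempty)
    (p F : Fin K → ℝ) (hp : ∀ k, 0 < p k) (hF : ∀ k, 0 ≤ F k)
    (lam : ℝ) (hlam : 0 ≤ lam)
    (L : Fin d → ℝ)
    (hL : ∀ i : Fin d, L i =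
      (1 / ((Finset.univ.filter (fun k => s k = i)).card : ℝ)) *
        ∑ k ∈ Finset.univ.filter (fun k => s k = i), F k)
    (r : Fin K → ℝ)
    (hr : ∀ k : Fin K, r k = ∑ j ∈ Finset.univ.erase (s k), Real.sign (L (s k) - L j)) :
    (∑ k : Fin K, p k * F k)
      + lam * ∑ pr ∈ Finset.univ.filter (fun pr : Fin d × Fin d => pr.1 < pr.2),
          |L pr.1 - L pr.2|
    = ∑ k : Fin K,
        p k * (1 + lam / (p k * ((Finset.univ.filter (fun k' => s k' = s k)).card : ℝ)) * r k)
          * F k := by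
  classical
  have hn : ∀ i : Fin d, (0:ℝ) < ((univ.filter (fun k => s k = i)).card : ℝ) := fun i => by
    exact_mod_cast Finset.card_pos.mpr (hA i)
  set c : Fin d → ℝ := fun i => ∑ j ∈ univ.erase i, Real.sign (L i - L j) with hc
  have hterm : ∀ k, p k * (1 + lam / (p k * ((univ.filter (fun k' => s k' = s k)).card : ℝ)) * r k) * F k
      = p k * F k + lam * (c (s k) / ((univ.filter (fun k' => s k' = s k)).card : ℝ)) * F k := by
    intro k
    have hp' := (hp k).ne'
    have hn' := (hn (s k)).ne'
    have gen : ∀ (x n P f : ℝ), P ≠ 0 → n ≠ 0 →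
        P * (1 + lam / (P * n) * x) * f = P * f + lam * (x / n) * f := by
      intro x n P f h1 h2; field_simp
    rw [hr k]
    exact gen _ _ _ _ hp' hn'
  rw [Finset.sum_congr rfl fun k _ => hterm k, Finset.sum_add_distrib]
  congr 1
  have key : ∑ pr ∈ univ.filter (fun pr : Fin d × Fin d => pr.1 < pr.2), |L pr.1 - L pr.2|
      = ∑ k : Fin K, (c (s k) / ((univ.filter (fun k' => s k' = s k)).card : ℝ)) * F k := by
    have hfib : ∑ k : Fin K, (c (s k) / ((univ.filter (fun k' => s k' = s k)).card : ℝ)) * F k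
        = ∑ i : Fin d, ∑ k ∈ univ.filter (fun k => s k = i),
            (c (s k) / ((univ.filter (fun k' => s k' = s k)).card : ℝ)) * F k := by
      rw [Finset.sum_fiberwise]
    rw [hfib]
    have hinner : ∀ i : Fin d, ∑ k ∈ univ.filter (fun k => s k = i),
        (c (s k) / ((univ.filter (fun k' => s k' = s k)).card : ℝ)) * F k = c i * L i := by
      intro i
      have step : (∑ k ∈ univ.filter (fun k => s k = i),
          (c (s k) / ((univ.filter (fun k' => s k' = s k)).card : ℝ)) * F k)
          = (c i / ((univ.filter (fun k => s k = i)).card : ℝ)) *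
              ∑ k ∈ univ.filter (fun k => s k = i), F k := by
        rw [Finset.mul_sum]
        refine Finset.sum_congr rfl fun k hk => ?_
        rw [Finset.mem_filter] at hk
        rw [hk.2]
      rw [step, hL i]
      ring
    rw [Finset.sum_congr rfl fun i _ => hinner i]
    -- now: ∑ pairs |L i - L j| = ∑ i, c i * L i
    have expand : ∑ i : Fin d, c i * L i
        = ∑ pr ∈ univ.filter (fun pr : Fin d × Fin d => pr.1 ≠ pr.2),
            Real.sign (L pr.1 - L pr.2) * L pr.1 := by
      rw [Finset.sum_filter, Fintype.sum_prod_type]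
      refine Finset.sum_congr rfl fun i _ => ?_
      rw [hc]
      simp only []
      rw [Finset.sum_mul, ← Finset.sum_filter]
      congr 1
      ext j
      simp [Finset.mem_erase, ne_comm, eq_comm]
    have split : ∑ pr ∈ univ.filter (fun pr : Fin d × Fin d => pr.1 ≠ pr.2),
            Real.sign (L pr.1 - L pr.2) * L pr.1
        = (∑ pr ∈ univ.filter (fun pr : Fin d × Fin d => pr.1 < pr.2),
            Real.sign (L pr.1 - L pr.2) * L pr.1)
        + ∑ pr ∈ univ.filter (fun pr : Fin d × Fin d => pr.2 < pr.1),
            Real.sign (L pr.1 - L pr.2) * L pr.1 := by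
      rw [← Finset.sum_filter_add_sum_filter_not
        (univ.filter (fun pr : Fin d × Fin d => pr.1 ≠ pr.2)) (fun pr => pr.1 < pr.2)]
      congr 1
      · congr 1
        ext pr
        simp only [Finset.mem_filter, Finset.mem_univ, true_and]
        constructor
        · exact fun h => h.2
        · exact fun h => ⟨ne_of_lt h, h⟩
      · congr 1
        ext pr
        simp only [Finset.mem_filter, Finset.mem_univ, true_and, not_lt]
        constructor
        · exact fun h => lt_of_le_of_ne h.2 (Ne.symm h.1)
        · exact fun h => ⟨(ne_of_lt h).symm, le_of_lt h⟩
    have swap : ∑ pr ∈ univ.filter (fun pr : Fin d × Fin d => pr.2 < pr.1),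
            Real.sign (L pr.1 - L pr.2) * L pr.1
        = ∑ pr ∈ univ.filter (fun pr : Fin d × Fin d => pr.1 < pr.2),
            Real.sign (L pr.2 - L pr.1) * L pr.2 := by
      apply Finset.sum_nbij' (fun pr => pr.swap) (fun pr => pr.swap)
      · intro a ha; simp at ha ⊢; exact ha
      · intro a ha; simp at ha ⊢; exact ha
      · intro a _; simp
      · intro a _; simp
      · intro a _; rfl
    rw [expand, split, swap, ← Finset.sum_add_distrib]
    refine (Finset.sum_congr rfl fun pr _ => ?_).symm
    have hsgn : Real.sign (L pr.2 - L pr.1) = - Real.sign (L pr.1 - L pr.2) := by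
      rw [← Real.sign_neg]; ring_nf
    rw [hsgn, ← sign_mul_eq_abs (L pr.1 - L pr.2)]
    ring
  rw [key, Finset.mul_sum]
  exact Finset.sum_congr rfl fun k _ => by ring
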